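/- arXiv:2403.03040 — 3 statements merged into one kernel-verified Lean document; each statement's English description precedes it below -/
import Mathlib

section
/- There exists a constant C < ∞ such that for all t > 0 and all z ∈ ℂ, the planar Brownian bridge from z to z of duration t satisfies E^{t,z,z}[ Area(Fill(p([0,t])))² ] ≤ C t², where for a compact set K ⊂ ℂ, Fill(K) denotes the complement of the unbounded connected component of ℂ ∖ K and Area denotes two-dimensional Lebesgue measure. -/
/-!
The filled hull of the bridge lies in the disc around `z` of radius `2 sup_{[0,t]} ‖B‖`, so its
squared area is at most `16 π² (sup_{[0,t]} ‖B‖)⁴`. Brownian increments satisfy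
`E‖B_b - B_a‖⁴ ≤ c (b - a)²`, and Kolmogorov's chaining argument over dyadic points turns such a
moment bound into `E (sup_{[0,t]} ‖B‖)⁴ ≤ C t²`.
-/

open MeasureTheory ProbabilityTheory Filter Set

noncomputable section

/-- A standard planar Brownian motion started at `0`. -/
structure IsPlanarBM {Ω : Type*} [MeasurableSpace Ω] (P : Measure Ω)
    (B : ℝ → Ω → ℂ) : Prop where
  meas : ∀ t : ℝ, Measurable (B t)
  start : ∀ ω, B 0 ω = 0
  cont : ∀ ω, Continuous fun t => B t ω
  indep : ∀ (n : ℕ) (t : ℕ → ℝ), Monotone t →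
    iIndepFun
      (fun i : Fin n => fun ω => B (t (i + 1)) ω - B (t i) ω) P
  gauss : ∀ s t : ℝ, 0 ≤ s → s ≤ t →
    Measure.map (fun ω => B t ω - B s ω) P =
      Measure.map (fun p : ℝ × ℝ => (p.1 : ℂ) + p.2 * Complex.I)
        ((gaussianReal 0 (Real.toNNReal (t - s))).prod
          (gaussianReal 0 (Real.toNNReal (t - s))))

/-- The Brownian bridge from `z` to `z` of duration `t` built from `B`:
`p_s = z + B_s - (s / t) B_t`. -/
def bridgePath {Ω : Type*} (B : ℝ → Ω → ℂ) (t : ℝ) (z : ℂ) (ω : Ω) (s : ℝ) : ℂ :=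
  z + B s ω - ((s / t : ℝ) : ℂ) * B t ω

/-- The range `p([0,t])` of the Brownian bridge from `z` to `z` of duration `t`. -/
def bridgeImg {Ω : Type*} (B : ℝ → Ω → ℂ) (t : ℝ) (z : ℂ) (ω : Ω) : Set ℂ :=
  bridgePath B t z ω '' Set.Icc 0 t

/-- `Fill K`: the complement of the unbounded connected component of `ℂ \ K`, i.e. the set of
points whose connected component in `ℂ \ K` is bounded (points of `K` included, since their
component in `ℂ \ K` is empty). -/
def Fill (K : Set ℂ) : Set ℂ :=
  {x : ℂ | Bornology.IsBounded (connectedComponentIn Kᶜ x)}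


open scoped ENNReal NNReal Topology

namespace ENNReal

lemma rpow_iSup_le_sum {ι : Type*} [Fintype ι] (x : ι → ℝ≥0∞) {p : ℝ} (hp : 0 < p) :
    (⨆ i, x i) ^ p ≤ ∑ i, x i ^ p := by
  rw [← le_rpow_inv_iff hp]
  refine iSup_le fun i => ?_
  calc x i = (x i ^ p) ^ p⁻¹ := (rpow_rpow_inv hp.ne' _).symm
    _ ≤ (∑ j, x j ^ p) ^ p⁻¹ :=
      rpow_le_rpow (Finset.single_le_sum (f := fun j => x j ^ p) (fun j _ => bot_le)
        (Finset.mem_univ i)) (inv_nonneg.2 hp.le)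

lemma two_pow_mul_ofReal_div_two_pow_rpow (T : ℝ) {q : ℝ} (hq : 0 ≤ q) (n : ℕ) :
    (2 : ℝ≥0∞) ^ n * ENNReal.ofReal (T / 2 ^ n) ^ q = ENNReal.ofReal T ^ q * (2 ^ (1 - q)) ^ n := by
  rw [ofReal_div_of_pos (by positivity), ENNReal.div_eq_inv_mul, mul_rpow_of_nonneg _ _ hq,
    ofReal_pow zero_le_two, ofReal_ofNat, inv_rpow, ← rpow_natCast, ← rpow_mul, ← rpow_natCast,
    ← rpow_mul, ← rpow_neg, mul_left_comm, ← mul_assoc,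
    ← rpow_add _ _ two_ne_zero ofNat_ne_top, mul_comm]
  ring_nf

end ENNReal

lemma integral_le_toReal_lintegral_ofReal {α : Type*} [MeasurableSpace α] {μ : Measure α}
    {f : α → ℝ} (hf : ∀ a, 0 ≤ f a) :
    ∫ a, f a ∂μ ≤ (∫⁻ a, ENNReal.ofReal (f a) ∂μ).toReal :=
  (Real.le_norm_self _).trans <| (norm_integral_le_lintegral_norm f).trans_eq <| by
    simp only [Real.norm_of_nonneg (hf _)]

section Minkowski

variable {α : Type*} [MeasurableSpace α] {μ : Measure α} {p : ℝ} {f : ℕ → α → ℝ≥0∞}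
  {c : ℕ → ℝ≥0∞}

lemma lintegral_sum_range_rpow_le (hp : 1 ≤ p) (hf : ∀ n, AEMeasurable (f n) μ)
    (hc : ∀ n, ∫⁻ a, f n a ^ p ∂μ ≤ c n ^ p) (N : ℕ) :
    ∫⁻ a, (∑ n ∈ Finset.range N, f n a) ^ p ∂μ ≤ (∑ n ∈ Finset.range N, c n) ^ p := by
  have hp0 : 0 < p := zero_lt_one.trans_le hp
  induction N with
  | zero => simp [ENNReal.zero_rpow_of_pos hp0]
  | succ N ih =>
    rw [← ENNReal.rpow_inv_le_iff hp0] at ih ⊢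
    simp only [Finset.sum_range_succ]
    calc (∫⁻ a, (∑ n ∈ Finset.range N, f n a + f N a) ^ p ∂μ) ^ p⁻¹
        ≤ (∫⁻ a, (∑ n ∈ Finset.range N, f n a) ^ p ∂μ) ^ p⁻¹ + (∫⁻ a, f N a ^ p ∂μ) ^ p⁻¹ := by
          simpa only [one_div, Pi.add_apply] using ENNReal.lintegral_Lp_add_le
            (Finset.aemeasurable_fun_sum _ fun n _ => hf n) (hf N) hp
      _ ≤ _ := add_le_add ih ((ENNReal.rpow_inv_le_iff hp0).2 (hc N))

lemma lintegral_tsum_rpow_le (hp : 1 ≤ p) (hf : ∀ n, AEMeasurable (f n) μ)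
    (hc : ∀ n, ∫⁻ a, f n a ^ p ∂μ ≤ c n ^ p) :
    ∫⁻ a, (∑' n, f n a) ^ p ∂μ ≤ (∑' n, c n) ^ p := by
  have hp0 : 0 ≤ p := zero_le_one.trans hp
  have hmono : ∀ᵐ a ∂μ, Monotone fun N => (∑ n ∈ Finset.range N, f n a) ^ p :=
    ae_of_all _ fun a M N hMN => ENNReal.rpow_le_rpow
      (Finset.sum_le_sum_of_subset (Finset.range_subset_range.2 hMN)) hp0
  have hlim : ∀ᵐ a ∂μ, Tendsto (fun N => (∑ n ∈ Finset.range N, f n a) ^ p) atTop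
      (𝓝 ((∑' n, f n a) ^ p)) :=
    ae_of_all _ fun a => (ENNReal.continuous_rpow_const.tendsto _).comp (ENNReal.tendsto_nat_tsum _)
  refine le_of_tendsto' (lintegral_tendsto_of_tendsto_of_monotone
    (fun N => (Finset.aemeasurable_fun_sum _ fun n _ => hf n).pow_const p) hmono hlim) fun N => ?_
  exact (lintegral_sum_range_rpow_le hp hf hc N).trans
    (ENNReal.rpow_le_rpow (ENNReal.sum_le_tsum _) hp0)

end Minkowski

section Chaining

variable {E : Type*} [NormedAddCommGroup E]

def dyadicIncrSup (f : ℝ → E) (T : ℝ) (n : ℕ) : ℝ≥0∞ :=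
  ⨆ k : Fin (2 ^ n), ‖f ((k + 1) / 2 ^ n * T) - f (k / 2 ^ n * T)‖ₑ

lemma enorm_dyadic_le_sum_dyadicIncrSup {f : ℝ → E} (hf0 : f 0 = 0) (T : ℝ) (N k : ℕ)
    (hk : k ≤ 2 ^ N) :
    ‖f (k / 2 ^ N * T)‖ₑ ≤ ∑ n ∈ Finset.range (N + 1), dyadicIncrSup f T n := by
  induction N generalizing k with
  | zero =>
    interval_cases k
    · simp [hf0]
    · simp [hf0, dyadicIncrSup]
  | succ N ih =>
    -- An even point of level `N + 1` is a point of level `N`; an odd one is one increment of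
    -- level `N + 1` away from such a point.
    rw [Finset.sum_range_succ]
    have hhalf : ∀ j : ℕ, ((2 * j : ℕ) : ℝ) / 2 ^ (N + 1) * T = j / 2 ^ N * T := fun j => by
      push_cast; field_simp; ring
    obtain ⟨j, rfl | rfl⟩ := Nat.even_or_odd' k
    · rw [hhalf]
      exact (ih j (by rw [pow_succ] at hk; omega)).trans le_self_add
    · have hj : 2 * j < 2 ^ (N + 1) := by omega
      have hincr : ‖f ((2 * j + 1 : ℕ) / 2 ^ (N + 1) * T) - f (j / 2 ^ N * T)‖ₑ ≤
          dyadicIncrSup f T (N + 1) := by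
        rw [← hhalf]
        exact le_iSup_of_le (⟨2 * j, hj⟩ : Fin _) (by push_cast; rfl)
      calc ‖f ((2 * j + 1 : ℕ) / 2 ^ (N + 1) * T)‖ₑ
          ≤ ‖f ((2 * j + 1 : ℕ) / 2 ^ (N + 1) * T) - f (j / 2 ^ N * T)‖ₑ +
              ‖f (j / 2 ^ N * T)‖ₑ := by
            simpa using enorm_add_le (f ((2 * j + 1 : ℕ) / 2 ^ (N + 1) * T) - f (j / 2 ^ N * T))
              (f (j / 2 ^ N * T))
        _ ≤ _ := add_le_add hincr (ih j (by rw [pow_succ] at hj; omega))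
        _ = _ := add_comm _ _

lemma enorm_le_tsum_dyadicIncrSup {f : ℝ → E} (hf : Continuous f) (hf0 : f 0 = 0) {T : ℝ}
    (hT : 0 < T) {s : ℝ} (hs : s ∈ Icc 0 T) :
    ‖f s‖ₑ ≤ ∑' n, dyadicIncrSup f T n := by
  set a := s / T
  have ha0 : 0 ≤ a := div_nonneg hs.1 hT.le
  have ha1 : a ≤ 1 := div_le_one_of_le₀ hs.2 hT.le
  have hlim : Tendsto (fun N : ℕ => (⌊a * 2 ^ N⌋₊ : ℝ) / 2 ^ N * T) atTop (𝓝 s) := by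
    have := ((tendsto_nat_floor_mul_div_atTop ha0).comp
      (tendsto_pow_atTop_atTop_of_one_lt one_lt_two)).mul_const T
    rwa [div_mul_cancel₀ _ hT.ne'] at this
  refine le_of_tendsto' ((hf.enorm.tendsto s).comp hlim) fun N => ?_
  refine (enorm_dyadic_le_sum_dyadicIncrSup hf0 T N _ ?_).trans (ENNReal.sum_le_tsum _)
  exact Nat.floor_le_of_le (by exact_mod_cast mul_le_of_le_one_left (by positivity) ha1)

end Chaining

section Kolmogorov

-- `(∑ₙ ρⁿ) ^ p` for the ratio `ρ = 2 ^ ((1 - q) / p)` of the dyadic `Lᵖ` bounds.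
def kolmogorovConst (p q : ℝ) : ℝ≥0∞ := (1 - 2 ^ ((1 - q) / p))⁻¹ ^ p

lemma kolmogorovConst_ne_top {p q : ℝ} (hp : 0 < p) (hq : 1 < q) : kolmogorovConst p q ≠ ⊤ := by
  have hρ : (2 : ℝ≥0∞) ^ ((1 - q) / p) < 1 :=
    ENNReal.rpow_lt_one_of_one_lt_of_neg ENNReal.one_lt_two (div_neg_of_neg_of_pos (by linarith) hp)
  exact ENNReal.rpow_ne_top_of_nonneg hp.le
    (ENNReal.inv_ne_top.2 fun h => hρ.not_ge (tsub_eq_zero_iff_le.1 h))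

variable {Ω E : Type*} [MeasurableSpace Ω] [NormedAddCommGroup E] {P : Measure Ω}
  {X : ℝ → Ω → E} {p q : ℝ} {K : ℝ≥0∞} {T : ℝ}

lemma aemeasurable_dyadicIncrSup (hX : ∀ s, AEStronglyMeasurable (X s) P) (T : ℝ) (n : ℕ) :
    AEMeasurable (fun ω => dyadicIncrSup (X · ω) T n) P :=
  AEMeasurable.iSup fun _ => ((hX _).sub (hX _)).enorm

lemma lintegral_dyadicIncrSup_rpow_le (hX : ∀ s, AEStronglyMeasurable (X s) P) (hp : 0 < p)
    (hq : 0 ≤ q)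
    (hK : ∀ a b, 0 ≤ a → a ≤ b → ∫⁻ ω, ‖X b ω - X a ω‖ₑ ^ p ∂P ≤ K * ENNReal.ofReal (b - a) ^ q)
    (hT : 0 ≤ T) (n : ℕ) :
    ∫⁻ ω, dyadicIncrSup (X · ω) T n ^ p ∂P ≤ K * ENNReal.ofReal T ^ q * (2 ^ (1 - q)) ^ n := by
  calc ∫⁻ ω, dyadicIncrSup (X · ω) T n ^ p ∂P
      ≤ ∫⁻ ω, ∑ k : Fin (2 ^ n), ‖X ((k + 1) / 2 ^ n * T) ω - X (k / 2 ^ n * T) ω‖ₑ ^ p ∂P :=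
        lintegral_mono fun ω => ENNReal.rpow_iSup_le_sum _ hp
    _ = ∑ k : Fin (2 ^ n), ∫⁻ ω, ‖X ((k + 1) / 2 ^ n * T) ω - X (k / 2 ^ n * T) ω‖ₑ ^ p ∂P :=
        lintegral_finsetSum' _ fun k _ => ((hX _).sub (hX _)).enorm.pow_const p
    _ ≤ ∑ _k : Fin (2 ^ n), K * ENNReal.ofReal (T / 2 ^ n) ^ q := by
        gcongr with k
        have h := hK (k / 2 ^ n * T) ((k + 1) / 2 ^ n * T) (by positivity) (by gcongr; simp)
        rwa [show ((k : ℝ) + 1) / 2 ^ n * T - k / 2 ^ n * T = T / 2 ^ n by ring] at h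
    _ = K * ENNReal.ofReal T ^ q * (2 ^ (1 - q)) ^ n := by
        rw [Finset.sum_const, Finset.card_univ, Fintype.card_fin, nsmul_eq_mul, Nat.cast_pow,
          Nat.cast_ofNat, mul_left_comm, ENNReal.two_pow_mul_ofReal_div_two_pow_rpow T hq,
          mul_assoc]

theorem lintegral_iSup_enorm_rpow_le_of_lintegral_enorm_sub_rpow_le
    (hX : ∀ s, AEStronglyMeasurable (X s) P) (hcont : ∀ ω, Continuous (X · ω))
    (hX0 : ∀ ω, X 0 ω = 0) (hp : 1 ≤ p) (hq : 1 < q)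
    (hK : ∀ a b, 0 ≤ a → a ≤ b → ∫⁻ ω, ‖X b ω - X a ω‖ₑ ^ p ∂P ≤ K * ENNReal.ofReal (b - a) ^ q)
    (hT : 0 < T) :
    ∫⁻ ω, (⨆ s ∈ Icc 0 T, ‖X s ω‖ₑ) ^ p ∂P ≤ K * ENNReal.ofReal T ^ q * kolmogorovConst p q := by
  have hp0 : 0 < p := zero_lt_one.trans_le hp
  set ρ : ℝ≥0∞ := 2 ^ ((1 - q) / p)
  have hρ : ρ ^ p = 2 ^ (1 - q) := by rw [← ENNReal.rpow_mul, div_mul_cancel₀ _ hp0.ne']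
  set c := (K * ENNReal.ofReal T ^ q) ^ p⁻¹
  have hc : c ^ p = K * ENNReal.ofReal T ^ q := ENNReal.rpow_inv_rpow hp0.ne' _
  calc ∫⁻ ω, (⨆ s ∈ Icc 0 T, ‖X s ω‖ₑ) ^ p ∂P
      ≤ ∫⁻ ω, (∑' n, dyadicIncrSup (X · ω) T n) ^ p ∂P :=
        lintegral_mono fun ω => ENNReal.rpow_le_rpow (iSup₂_le fun s hs =>
          enorm_le_tsum_dyadicIncrSup (hcont ω) (hX0 ω) hT hs) hp0.le
    _ ≤ (∑' n, c * ρ ^ n) ^ p := by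
        refine lintegral_tsum_rpow_le hp (aemeasurable_dyadicIncrSup hX T) fun n => ?_
        rw [ENNReal.mul_rpow_of_nonneg _ _ hp0.le, hc, ← ENNReal.rpow_natCast,
          ← ENNReal.rpow_mul, mul_comm (n : ℝ) p, ENNReal.rpow_mul, hρ, ENNReal.rpow_natCast]
        exact lintegral_dyadicIncrSup_rpow_le hX hp0 (by linarith) hK hT.le n
    _ = K * ENNReal.ofReal T ^ q * kolmogorovConst p q := by
        rw [ENNReal.tsum_mul_left, ENNReal.tsum_geometric, ENNReal.mul_rpow_of_nonneg _ _ hp0.le,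
          hc, kolmogorovConst]

end Kolmogorov

lemma eLpNorm_id_gaussianReal (v : ℝ≥0) (p : ℝ≥0∞) :
    eLpNorm id p (gaussianReal 0 v) = NNReal.sqrt v * eLpNorm id p (gaussianReal 0 1) := by
  have hv : gaussianReal 0 v = (gaussianReal 0 1).map ((NNReal.sqrt v : ℝ) * ·) := by
    rw [gaussianReal_map_const_mul, mul_zero, mul_one]
    congr
    ext
    simp
  rw [hv, eLpNorm_map_measure aestronglyMeasurable_id (measurable_const_mul _).aemeasurable]
  have : (id ∘ fun x : ℝ => (NNReal.sqrt v : ℝ) * x) = (NNReal.sqrt v : ℝ) • id := rfl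
  rw [this, eLpNorm_const_smul, Real.enorm_of_nonneg (NNReal.coe_nonneg _),
    ENNReal.ofReal_coe_nnreal]

lemma eLpNorm_ofReal_add_mul_I_le (μ ν : Measure ℝ) [IsProbabilityMeasure μ]
    [IsProbabilityMeasure ν] {p : ℝ≥0∞} (hp : 1 ≤ p) :
    eLpNorm (fun x : ℝ × ℝ => (x.1 : ℂ) + x.2 * Complex.I) p (μ.prod ν) ≤
      eLpNorm id p μ + eLpNorm id p ν := by
  calc eLpNorm (fun x : ℝ × ℝ => (x.1 : ℂ) + x.2 * Complex.I) p (μ.prod ν)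
      ≤ eLpNorm (fun x : ℝ × ℝ => (x.1 : ℂ)) p (μ.prod ν) +
          eLpNorm (fun x : ℝ × ℝ => (x.2 : ℂ) * Complex.I) p (μ.prod ν) :=
        eLpNorm_add_le (by fun_prop) (by fun_prop) hp
    _ = eLpNorm id p μ + eLpNorm id p ν := by
        rw [← eLpNorm_comp_measurePreserving aestronglyMeasurable_id
            (measurePreserving_fst (μ := μ) (ν := ν)),
          ← eLpNorm_comp_measurePreserving aestronglyMeasurable_id
            (measurePreserving_snd (μ := μ) (ν := ν))]
        congr 1 <;> exact eLpNorm_congr_enorm_ae (ae_of_all _ fun x => by simp [← ofReal_norm])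

lemma IsPlanarBM.eLpNorm_sub_le {Ω : Type*} [MeasurableSpace Ω] {P : Measure Ω}
    {B : ℝ → Ω → ℂ} (hB : IsPlanarBM P B) {p : ℝ≥0∞} (hp : 1 ≤ p)
    {a b : ℝ} (ha : 0 ≤ a) (hab : a ≤ b) :
    eLpNorm (fun ω => B b ω - B a ω) p P ≤
      2 * NNReal.sqrt (b - a).toNNReal * eLpNorm id p (gaussianReal 0 1) := by
  calc eLpNorm (fun ω => B b ω - B a ω) p P
      = eLpNorm id p (P.map fun ω => B b ω - B a ω) :=
        (eLpNorm_map_measure aestronglyMeasurable_id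
          ((hB.meas b).sub (hB.meas a)).aemeasurable).symm
    _ = eLpNorm (fun x : ℝ × ℝ => (x.1 : ℂ) + x.2 * Complex.I) p
          ((gaussianReal 0 (b - a).toNNReal).prod (gaussianReal 0 (b - a).toNNReal)) := by
        rw [hB.gauss a b ha hab, eLpNorm_map_measure aestronglyMeasurable_id (by fun_prop)]
        rfl
    _ ≤ _ := eLpNorm_ofReal_add_mul_I_le _ _ hp
    _ = _ := by rw [eLpNorm_id_gaussianReal, ← two_mul, mul_assoc]

lemma IsPlanarBM.lintegral_enorm_sub_rpow_four_le {Ω : Type*} [MeasurableSpace Ω]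
    {P : Measure Ω} {B : ℝ → Ω → ℂ} (hB : IsPlanarBM P B) {a b : ℝ} (ha : 0 ≤ a) (hab : a ≤ b) :
    ∫⁻ ω, ‖B b ω - B a ω‖ₑ ^ (4 : ℝ) ∂P ≤
      (2 * eLpNorm id 4 (gaussianReal 0 1)) ^ (4 : ℝ) * ENNReal.ofReal (b - a) ^ (2 : ℝ) := by
  have h := eLpNorm_nnreal_pow_eq_lintegral (μ := P) (f := fun ω => B b ω - B a ω)
    (p := 4) four_ne_zero
  simp only [ENNReal.coe_ofNat, NNReal.coe_ofNat] at h
  rw [← h, ENNReal.rpow_ofNat, ENNReal.rpow_ofNat, ENNReal.rpow_ofNat]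
  calc eLpNorm (fun ω => B b ω - B a ω) 4 P ^ 4
      ≤ (2 * NNReal.sqrt (b - a).toNNReal * eLpNorm id 4 (gaussianReal 0 1)) ^ 4 :=
        pow_le_pow_left' (hB.eLpNorm_sub_le (by norm_num) ha hab) 4
    _ = _ := by
        rw [mul_right_comm, mul_pow, ENNReal.ofReal, ← ENNReal.coe_pow, ← ENNReal.coe_pow,
          show 4 = 2 * 2 by rfl, pow_mul (NNReal.sqrt _), NNReal.sq_sqrt]

lemma Fill_subset_closedBall {K : Set ℂ} {z : ℂ} {r : ℝ} (hr : 0 ≤ r)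
    (hK : K ⊆ Metric.closedBall z r) : Fill K ⊆ Metric.closedBall z r := by
  intro x hx
  by_contra hxr
  have hxz : r < ‖x - z‖ := by simpa [dist_eq_norm] using hxr
  set ray : ℝ → ℂ := fun c => z + c * (x - z)
  have hnorm : ∀ c : ℝ, 0 ≤ c → ‖ray c - z‖ = c * ‖x - z‖ := fun c hc => by
    simp [ray, abs_of_nonneg hc]
  -- The part of the ray from `z` through `x` beyond `x` avoids `K`, hence stays in the
  -- component of `x`, but it is unbounded.
  have hray : ray '' Ici 1 ⊆ connectedComponentIn Kᶜ x := by
    refine (isPreconnected_Ici.image _ (by fun_prop)).subset_connectedComponentIn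
      ⟨1, mem_Ici.2 le_rfl, by simp [ray]⟩ ?_
    rintro _ ⟨c, hc, rfl⟩ hcK
    have := hK hcK
    rw [Metric.mem_closedBall, dist_eq_norm, hnorm c (zero_le_one.trans hc)] at this
    nlinarith [mem_Ici.1 hc]
  have hbdd : Bornology.IsBounded (connectedComponentIn Kᶜ x) := hx
  obtain ⟨C, hC⟩ := (Metric.isBounded_iff_subset_closedBall z).1 (hbdd.subset hray)
  have hc : 1 ≤ |C| / ‖x - z‖ + 1 := le_add_of_nonneg_left (by positivity)
  have hfar := hC ⟨_, hc, rfl⟩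
  rw [Metric.mem_closedBall, dist_eq_norm, hnorm _ (zero_le_one.trans hc), add_mul,
    div_mul_cancel₀ _ (hr.trans_lt hxz).ne', one_mul] at hfar
  linarith [le_abs_self C]

lemma volume_Fill_le_of_subset_closedEBall {K : Set ℂ} {z : ℂ} {ρ : ℝ≥0∞}
    (hK : K ⊆ Metric.closedEBall z ρ) :
    volume (Fill K) ≤ ρ ^ 2 * NNReal.pi := by
  rcases eq_or_ne ρ ⊤ with rfl | hρ
  · simp [ENNReal.top_mul, NNReal.pi_pos.ne']
  lift ρ to ℝ≥0 using hρ
  rw [Metric.closedEBall_coe] at hK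
  calc volume (Fill K) ≤ volume (Metric.closedBall z ρ) :=
        measure_mono (Fill_subset_closedBall ρ.2 hK)
    _ = _ := by rw [Complex.volume_closedBall, ENNReal.ofReal_coe_nnreal]

section Bridge

variable {Ω : Type*} (B : ℝ → Ω → ℂ) (t : ℝ) (z : ℂ) (ω : Ω)

lemma bridgeImg_subset_closedEBall :
    bridgeImg B t z ω ⊆ Metric.closedEBall z (2 * ⨆ s ∈ Icc 0 t, ‖B s ω‖ₑ) := by
  rintro _ ⟨s, hs, rfl⟩
  set R := ⨆ s ∈ Icc 0 t, ‖B s ω‖ₑ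
  have hR : ∀ u ∈ Icc 0 t, ‖B u ω‖ₑ ≤ R := fun u hu =>
    le_iSup₂ (f := fun s _ => ‖B s ω‖ₑ) u hu
  have ht : 0 ≤ t := hs.1.trans hs.2
  have hst : ‖((s / t : ℝ) : ℂ)‖ₑ ≤ 1 := by
    rw [← ofReal_norm, Complex.norm_real, Real.norm_of_nonneg (div_nonneg hs.1 ht)]
    exact ENNReal.ofReal_le_one.2 (div_le_one_of_le₀ hs.2 ht)
  rw [Metric.mem_closedEBall, edist_eq_enorm_sub, two_mul]
  calc ‖bridgePath B t z ω s - z‖ₑ = ‖B s ω - ((s / t : ℝ) : ℂ) * B t ω‖ₑ := by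
        rw [bridgePath, add_sub_assoc, add_sub_cancel_left]
    _ ≤ ‖B s ω‖ₑ + ‖((s / t : ℝ) : ℂ)‖ₑ * ‖B t ω‖ₑ :=
        enorm_sub_le.trans_eq (by rw [enorm_mul])
    _ ≤ R + 1 * R := add_le_add (hR s hs) (mul_le_mul' hst (hR t ⟨ht, le_rfl⟩))
    _ = R + R := by rw [one_mul]

lemma ofReal_sq_volume_Fill_bridgeImg_le :
    ENNReal.ofReal ((volume (Fill (bridgeImg B t z ω))).toReal ^ 2) ≤
      16 * NNReal.pi ^ 2 * (⨆ s ∈ Icc 0 t, ‖B s ω‖ₑ) ^ 4 := by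
  calc ENNReal.ofReal ((volume (Fill (bridgeImg B t z ω))).toReal ^ 2)
      = ENNReal.ofReal (volume (Fill (bridgeImg B t z ω))).toReal ^ 2 :=
        ENNReal.ofReal_pow ENNReal.toReal_nonneg 2
    _ ≤ volume (Fill (bridgeImg B t z ω)) ^ 2 := pow_le_pow_left' ENNReal.ofReal_toReal_le 2
    _ ≤ ((2 * ⨆ s ∈ Icc 0 t, ‖B s ω‖ₑ) ^ 2 * NNReal.pi) ^ 2 :=
        pow_le_pow_left'
          (volume_Fill_le_of_subset_closedEBall (bridgeImg_subset_closedEBall B t z ω)) 2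
    _ = 16 * NNReal.pi ^ 2 * (⨆ s ∈ Icc 0 t, ‖B s ω‖ₑ) ^ 4 := by ring

variable {B} {t}

lemma IsPlanarBM.lintegral_ofReal_sq_volume_Fill_bridgeImg_le [MeasurableSpace Ω] {P : Measure Ω}
    (hB : IsPlanarBM P B) (ht : 0 < t) :
    ∫⁻ ω, ENNReal.ofReal ((volume (Fill (bridgeImg B t z ω))).toReal ^ 2) ∂P ≤
      16 * NNReal.pi ^ 2 * (2 * eLpNorm id 4 (gaussianReal 0 1)) ^ 4 * kolmogorovConst 4 2 *
        ENNReal.ofReal t ^ 2 := by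
  have hsup := lintegral_iSup_enorm_rpow_le_of_lintegral_enorm_sub_rpow_le
    (fun s => (hB.meas s).aestronglyMeasurable) hB.cont hB.start (by norm_num) (by norm_num)
    (fun a b ha hab => hB.lintegral_enorm_sub_rpow_four_le ha hab) ht
  simp only [ENNReal.rpow_ofNat] at hsup
  calc ∫⁻ ω, ENNReal.ofReal ((volume (Fill (bridgeImg B t z ω))).toReal ^ 2) ∂P
      ≤ ∫⁻ ω, 16 * NNReal.pi ^ 2 * (⨆ s ∈ Icc 0 t, ‖B s ω‖ₑ) ^ 4 ∂P :=
        lintegral_mono fun ω => ofReal_sq_volume_Fill_bridgeImg_le B t z ω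
    _ = 16 * NNReal.pi ^ 2 * ∫⁻ ω, (⨆ s ∈ Icc 0 t, ‖B s ω‖ₑ) ^ 4 ∂P :=
        lintegral_const_mul' _ _ (by finiteness)
    _ ≤ 16 * NNReal.pi ^ 2 * ((2 * eLpNorm id 4 (gaussianReal 0 1)) ^ 4 * ENNReal.ofReal t ^ 2 *
          kolmogorovConst 4 2) := by gcongr
    _ = _ := by ring

end Bridge


/-- There is a constant `C < ∞` such that for every planar Brownian bridge
from `z` to `z` of duration `t > 0`, `E^{t,z,z}[Area(Fill(p([0,t])))²] ≤ C t²`. -/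
theorem fill_area_sq_moment :
    ∃ C : ℝ, ∀ (Ω : Type) (_ : MeasurableSpace Ω) (P : Measure Ω),
      IsProbabilityMeasure P → ∀ B : ℝ → Ω → ℂ, IsPlanarBM P B →
      ∀ t : ℝ, 0 < t → ∀ z : ℂ,
        ∫ ω, (volume (Fill (bridgeImg B t z ω))).toReal ^ 2 ∂P ≤ C * t ^ 2 := by
  set C : ℝ≥0∞ :=
    16 * NNReal.pi ^ 2 * (2 * eLpNorm id 4 (gaussianReal 0 1)) ^ 4 * kolmogorovConst 4 2
  have hM : eLpNorm id 4 (gaussianReal 0 1) ≠ ⊤ :=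
    (memLp_id_gaussianReal' 4 (by norm_num)).eLpNorm_ne_top
  have hK : kolmogorovConst 4 2 ≠ ⊤ := kolmogorovConst_ne_top (by norm_num) (by norm_num)
  refine ⟨C.toReal, fun Ω _ P _ B hB t ht z => ?_⟩
  calc ∫ ω, (volume (Fill (bridgeImg B t z ω))).toReal ^ 2 ∂P
      ≤ (∫⁻ ω, ENNReal.ofReal ((volume (Fill (bridgeImg B t z ω))).toReal ^ 2) ∂P).toReal :=
        integral_le_toReal_lintegral_ofReal fun ω => sq_nonneg _
    _ ≤ (C * ENNReal.ofReal t ^ 2).toReal :=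
        ENNReal.toReal_mono (by finiteness) (hB.lintegral_ofReal_sq_volume_Fill_bridgeImg_le z ht)
    _ = C.toReal * t ^ 2 := by
        rw [ENNReal.toReal_mul, ENNReal.toReal_pow, ENNReal.toReal_ofReal ht.le]

end
end

section
/- Let z₀ ∈ ℂ, r > 0, and let f be holomorphic on the open ball B(z₀, r) with Im f(z) ≥ 0 for all z ∈ B(z₀, r). Then |f'(z₀)| ≤ 2√2 · Im f(z₀) / r. (Equivalently, each partial derivative of the nonnegative harmonic function v = Im f at z₀ is bounded in absolute value by 2 v(z₀)/r.) -/
/-!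
The Cayley transform `w ↦ (w - p) / (w - conj p)` with `p = f z₀` maps the closed upper half-plane
into the closed unit disk and sends `f z₀` to `0`. The Schwarz lemma applied to its composite with
`f` gives `‖f'(z₀)‖ / (2 Im f(z₀)) ≤ 1 / r`, first when `Im f > 0`, and in general by applying this
to `f + iε` and letting `ε → 0`. This is stronger than the claim by a factor `√2`.
-/

open Complex ComplexConjugate Metric Set Filter Topology

namespace Complex

lemma sub_conj_ne_zero_of_im_nonneg {w p : ℂ} (hw : 0 ≤ w.im) (hp : 0 < p.im) :
    w - conj p ≠ 0 := by
  intro h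
  have := congrArg im h
  simp only [sub_im, conj_im, zero_im] at this
  linarith

lemma norm_sub_le_norm_sub_conj {w p : ℂ} (hw : 0 ≤ w.im) (hp : 0 ≤ p.im) :
    ‖w - p‖ ≤ ‖w - conj p‖ := by
  rw [← sq_le_sq₀ (norm_nonneg _) (norm_nonneg _), Complex.sq_norm, Complex.sq_norm]
  simp only [normSq_apply, sub_re, sub_im, conj_re, conj_im]
  nlinarith [mul_nonneg hw hp]

end Complex

lemma HasDerivAt.sub_div_sub_self {f : ℂ → ℂ} {f' c z₀ : ℂ} (hf : HasDerivAt f f' z₀)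
    (hc : f z₀ - c ≠ 0) :
    HasDerivAt (fun z => (f z - f z₀) / (f z - c)) (f' / (f z₀ - c)) z₀ := by
  refine ((hf.sub_const (f z₀)).div (hf.sub_const c) hc).congr_deriv ?_
  field_simp
  ring

theorem norm_deriv_le_two_mul_im_div_of_im_pos {z₀ : ℂ} {r : ℝ} (hr : 0 < r) {f : ℂ → ℂ}
    (hf : DifferentiableOn ℂ f (ball z₀ r)) (him : ∀ z ∈ ball z₀ r, 0 < (f z).im) :
    ‖deriv f z₀‖ ≤ 2 * (f z₀).im / r := by
  set p := f z₀
  have hz₀ : z₀ ∈ ball z₀ r := mem_ball_self hr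
  have hp : 0 < p.im := him z₀ hz₀
  have hden : ∀ z ∈ ball z₀ r, f z - conj p ≠ 0 := fun z hz =>
    sub_conj_ne_zero_of_im_nonneg (him z hz).le hp
  set g : ℂ → ℂ := fun z => (f z - p) / (f z - conj p)
  have hg : DifferentiableOn ℂ g (ball z₀ r) := (hf.sub_const p).div (hf.sub_const _) hden
  have hmaps : MapsTo g (ball z₀ r) (closedBall (g z₀) 1) := by
    intro z hz
    rw [mem_closedBall, show g z₀ = 0 by simp [g, p], dist_zero_right, norm_div,
      div_le_one (norm_pos_iff.mpr (hden z hz))]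
    exact norm_sub_le_norm_sub_conj (him z hz).le hp.le
  have hderiv : deriv g z₀ = deriv f z₀ / (p - conj p) :=
    ((hf.differentiableAt (isOpen_ball.mem_nhds hz₀)).hasDerivAt.sub_div_sub_self
      (hden z₀ hz₀)).deriv
  have hschwarz := norm_deriv_le_div_of_mapsTo_ball hg hmaps hr
  rw [hderiv, norm_div, sub_conj, norm_mul, norm_I, mul_one, norm_real, Real.norm_of_nonneg
    (by positivity), div_le_div_iff₀ (by positivity) hr] at hschwarz
  rw [le_div_iff₀ hr]
  linarith

theorem norm_deriv_le_two_mul_im_div {z₀ : ℂ} {r : ℝ} (hr : 0 < r) {f : ℂ → ℂ}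
    (hf : DifferentiableOn ℂ f (ball z₀ r)) (him : ∀ z ∈ ball z₀ r, 0 ≤ (f z).im) :
    ‖deriv f z₀‖ ≤ 2 * (f z₀).im / r := by
  have hshift : ∀ ε > 0, ‖deriv f z₀‖ ≤ 2 * ((f z₀).im + ε) / r := fun ε hε => by
    simpa [deriv_add_const] using norm_deriv_le_two_mul_im_div_of_im_pos hr
      (f := fun z => f z + ε * I) (hf.add_const _)
      (fun z hz => by simpa using add_pos_of_nonneg_of_pos (him z hz) hε)
  have hlim : Tendsto (fun ε => 2 * ((f z₀).im + ε) / r) (𝓝[>] 0) (𝓝 (2 * (f z₀).im / r)) := by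
    refine tendsto_nhdsWithin_of_tendsto_nhds ?_
    simpa using ((continuous_const.add continuous_id).const_mul 2).div_const r |>.tendsto 0
  exact ge_of_tendsto hlim (eventually_nhdsWithin_of_forall hshift)

/-- If `f` is holomorphic on the open disk `B(z₀, r)` with `Im f ≥ 0`
there, then `|f'(z₀)| ≤ 2√2 · Im f(z₀) / r`. -/
theorem deriv_bound_of_nonneg_im (z₀ : ℂ) (r : ℝ) (hr : 0 < r) (f : ℂ → ℂ)
    (hf : DifferentiableOn ℂ f (Metric.ball z₀ r))
    (him : ∀ z ∈ Metric.ball z₀ r, 0 ≤ (f z).im) :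
    ‖deriv f z₀‖ ≤ 2 * Real.sqrt 2 * (f z₀).im / r := by
  have hv : 0 ≤ (f z₀).im := him z₀ (mem_ball_self hr)
  calc ‖deriv f z₀‖ ≤ 2 * (f z₀).im / r := norm_deriv_le_two_mul_im_div hr hf him
    _ ≤ 2 * Real.sqrt 2 * (f z₀).im / r := by
      gcongr
      exact le_mul_of_one_le_right zero_le_two Real.one_lt_sqrt_two.le
end

section
/- Let h > 0, let a ∈ ℝ and let b ∈ (0, πh). Then ∫_{−∞}^{∞} (1/(2πh)) · sin(b/h) / ( cosh((a − s)/h) − cos(b/h) ) ds = 1 − b/(πh). (This says that the Poisson kernel of the horizontal strip ℝ + i(0, πh), rooted at a point x with Re x = a and Im x = b, integrates over the bottom boundary ℝ to 1 − Im x/(πh).) -/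
/-! With `θ = b / h`, the substitution `u = (a - s) / h` reduces the claim to
`∫ sin θ / (cosh u - cos θ) du = 2 (π - θ)`. Putting `t = eᵘ` turns the integrand into
`2 sin θ / ((t - cos θ)² + sin² θ) dt`, so `2 arctan ((eᵘ - cos θ) / sin θ)` is an antiderivative;
it increases from `2θ - π` at `-∞` to `π` at `+∞`. -/

open MeasureTheory Filter Real Topology

theorem integrable_deriv_of_nonneg_of_tendsto {g g' : ℝ → ℝ} {m n : ℝ}
    (hderiv : ∀ x, HasDerivAt g (g' x) x) (hg' : ∀ x, 0 ≤ g' x)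
    (hbot : Tendsto g atBot (𝓝 m)) (htop : Tendsto g atTop (𝓝 n)) : Integrable g' := by
  have hcont : Continuous g := continuous_iff_continuousAt.2 fun x ↦ (hderiv x).continuousAt
  have hmono : Monotone g :=
    monotone_of_deriv_nonneg (fun x ↦ (hderiv x).differentiableAt) fun x ↦ (hderiv x).deriv ▸ hg' x
  have hIoc (x y : ℝ) : IntegrableOn g' (Set.Ioc x y) :=
    intervalIntegral.integrableOn_deriv_of_nonneg hcont.continuousOn (fun z _ ↦ hderiv z)
      fun z _ ↦ hg' z
  refine integrable_of_intervalIntegral_norm_bounded (n - m)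
    (fun i ↦ hIoc (-i) i) tendsto_neg_atTop_atBot tendsto_id ?_
  filter_upwards [eventually_ge_atTop 0] with i hi
  have hint : IntervalIntegrable g' volume (-i) i :=
    (intervalIntegrable_iff_integrableOn_Ioc_of_le (by linarith)).2 (hIoc (-i) i)
  have hnorm (x : ℝ) : ‖g' x‖ = g' x := Real.norm_of_nonneg (hg' x)
  simp_rw [hnorm]
  rw [intervalIntegral.integral_eq_sub_of_hasDerivAt (fun x _ ↦ hderiv x) hint]
  linarith [hmono.ge_of_tendsto htop i, hmono.le_of_tendsto hbot (-i)]

theorem cos_lt_cosh {θ : ℝ} (hθ : sin θ ≠ 0) (u : ℝ) : cos θ < cosh u := by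
  have hcos : cos θ ≠ 1 := fun h ↦ hθ <| by nlinarith [sin_sq_add_cos_sq θ, sq_nonneg (sin θ)]
  exact (lt_of_le_of_ne (cos_le_one θ) hcos).trans_le (one_le_cosh u)

theorem hasDerivAt_two_mul_arctan_exp_sub_cos_div_sin {θ : ℝ} (hθ : sin θ ≠ 0) (u : ℝ) :
    HasDerivAt (fun u ↦ 2 * arctan ((exp u - cos θ) / sin θ))
      (sin θ / (cosh u - cos θ)) u := by
  have hinner : HasDerivAt (fun u ↦ (exp u - cos θ) / sin θ) (exp u / sin θ) u :=
    ((hasDerivAt_exp u).sub_const _).div_const _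
  refine (((hasDerivAt_arctan _).comp u hinner).const_mul 2).congr_deriv ?_
  have hkey : sin θ ^ 2 + (exp u - cos θ) ^ 2 = 2 * exp u * (cosh u - cos θ) := by
    rw [cosh_eq, exp_neg]
    field_simp
    linear_combination sin_sq_add_cos_sq θ
  rw [div_pow, one_add_div (pow_ne_zero 2 hθ), hkey]
  field_simp

theorem tendsto_two_mul_arctan_exp_sub_cos_div_sin_atTop {θ : ℝ} (hθ : 0 < sin θ) :
    Tendsto (fun u ↦ 2 * arctan ((exp u - cos θ) / sin θ)) atTop (𝓝 π) := by
  have hinner : Tendsto (fun u ↦ (exp u - cos θ) / sin θ) atTop atTop :=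
    (tendsto_exp_atTop.atTop_add tendsto_const_nhds).atTop_div_const hθ
  have := ((tendsto_arctan_atTop.mono_right nhdsWithin_le_nhds).comp hinner).const_mul 2
  rwa [mul_div_cancel₀ π two_ne_zero] at this

theorem tendsto_two_mul_arctan_exp_sub_cos_div_sin_atBot (θ : ℝ) :
    Tendsto (fun u ↦ 2 * arctan ((exp u - cos θ) / sin θ)) atBot
      (𝓝 (2 * arctan (-cos θ / sin θ))) := by
  have hinner : Tendsto (fun u ↦ (exp u - cos θ) / sin θ) atBot (𝓝 (-cos θ / sin θ)) := by
    simpa using (tendsto_exp_atBot.sub_const (cos θ)).div_const (sin θ)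
  exact ((continuous_arctan.tendsto _).comp hinner).const_mul 2

theorem arctan_neg_cos_div_sin {θ : ℝ} (h0 : 0 < θ) (hπ : θ < π) :
    arctan (-cos θ / sin θ) = θ - π / 2 := by
  rw [← sin_sub_pi_div_two θ, ← cos_sub_pi_div_two θ, ← tan_eq_sin_div_cos]
  exact arctan_tan (by linarith) (by linarith)

theorem integral_sin_div_cosh_sub_cos {θ : ℝ} (h0 : 0 < θ) (hπ : θ < π) :
    ∫ u, sin θ / (cosh u - cos θ) = 2 * (π - θ) := by
  have hsin : 0 < sin θ := sin_pos_of_pos_of_lt_pi h0 hπ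
  have hderiv := hasDerivAt_two_mul_arctan_exp_sub_cos_div_sin hsin.ne'
  have hbot := tendsto_two_mul_arctan_exp_sub_cos_div_sin_atBot θ
  have htop := tendsto_two_mul_arctan_exp_sub_cos_div_sin_atTop hsin
  have hnonneg (u : ℝ) : 0 ≤ sin θ / (cosh u - cos θ) :=
    div_nonneg hsin.le (sub_pos.2 (cos_lt_cosh hsin.ne' u)).le
  rw [integral_of_hasDerivAt_of_tendsto hderiv
    (integrable_deriv_of_nonneg_of_tendsto hderiv hnonneg hbot htop) hbot htop,
    arctan_neg_cos_div_sin h0 hπ]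
  ring

/-- For `h > 0`, `a ∈ ℝ` and `b ∈ (0, πh)`,
`∫_ℝ (1/(2πh)) sin(b/h) / (cosh((a-s)/h) - cos(b/h)) ds = 1 - b/(πh)`:
the Poisson kernel of the strip `ℝ + i(0, πh)` at the interior point `a + ib` integrates
over the bottom boundary to `1 - b/(πh)`. -/
theorem strip_poisson_kernel_integral (h a b : ℝ) (hh : 0 < h) (hb : 0 < b)
    (hbh : b < Real.pi * h) :
    ∫ s : ℝ, (1 / (2 * Real.pi * h)) * Real.sin (b / h) /
        (Real.cosh ((a - s) / h) - Real.cos (b / h)) =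
      1 - b / (Real.pi * h) := by
  have hθ0 : 0 < b / h := div_pos hb hh
  have hθπ : b / h < π := (div_lt_iff₀ hh).2 hbh
  have hsubst :
      ∫ s, sin (b / h) / (cosh ((a - s) / h) - cos (b / h)) = h * (2 * (π - b / h)) := by
    rw [integral_sub_left_eq_self (fun s ↦ sin (b / h) / (cosh (s / h) - cos (b / h))),
      Measure.integral_comp_div (fun u ↦ sin (b / h) / (cosh u - cos (b / h))),
      integral_sin_div_cosh_sub_cos hθ0 hθπ, abs_of_pos hh, smul_eq_mul]
  simp_rw [mul_div_assoc]
  rw [integral_const_mul, hsubst]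
  field_simp
end
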